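/- Let σ > 0 and c ≥ 0. Set κ_c(r) = exp(−(r² + c²)/σ²) · I₀(2rc/σ²) for r ≥ 0, and let p: ℂ → ℝ be the density p(w) = κ_c(|w|)/(πσ²). Then the differential entropy of p minus the Gaussian noise entropy equals the one-dimensional integral expression: −∫_ℂ p(w) ln p(w) dw − ln(π e σ²) = −∫_0^∞ (2r/σ²) · κ_c(r) · ln κ_c(r) dr − 1. (This is the paper's Theorem 1: the mutual information I(X₂; Y | X₁ = x₁) of the phase-modulated channel Y = c e^{iΘ} + Z with c = |h x₁|, Θ uniform on [−π,π), Z ~ CN(0,σ²), expressed in nats.) -/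

import Mathlib

open MeasureTheory Real

/-- The modified Bessel function of the first kind of order zero:
`I₀(x) = (1/(2π)) ∫_{−π}^{π} e^{x cos θ} dθ`. -/
noncomputable def I0 (x : ℝ) : ℝ := (1 / (2 * π)) * ∫ θ in (-π)..π, Real.exp (x * Real.cos θ)

/-- `κ_c(r) = exp(−(r² + c²)/σ²) · I₀(2rc/σ²)`. -/
noncomputable def kappa (σ c r : ℝ) : ℝ :=
  Real.exp (-(r ^ 2 + c ^ 2) / σ ^ 2) * I0 (2 * r * c / σ ^ 2)

/-!
By the law of cosines, `κ_c(|w|)/(πσ²)` is the average over `θ` of the density of `CN(c e^{iθ}, σ²)`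
at `w`; Fubini and translation invariance of Lebesgue measure on `ℂ` then show that it has total
mass one, i.e. `∫_0^∞ r κ_c(r) dr = σ²/2`. The entropy identity follows by passing to polar
coordinates and splitting `ln (κ_c/(πσ²)) = ln κ_c − ln(πσ²)`. The bounds
`e^{−(r²+c²)/σ²} ≤ κ_c(r) ≤ e^{−(r−|c|)²/σ²}` make every integral involved absolutely convergent.
-/

open Set

theorem exp_neg_sq_sub_div_le (r a : ℝ) {s : ℝ} (hs : 0 ≤ s) :
    rexp (-(r - a) ^ 2 / s) ≤ rexp (a ^ 2 / s) * rexp (-(2 * s)⁻¹ * r ^ 2) := by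
  rw [← Real.exp_add, exp_le_exp, ← sub_nonneg]
  have hdiff : a ^ 2 / s + -(2 * s)⁻¹ * r ^ 2 - -(r - a) ^ 2 / s = (r - 2 * a) ^ 2 / (2 * s) := by
    ring
  rw [hdiff]
  positivity

theorem integral_comp_norm_complex (f : ℝ → ℝ) :
    ∫ w : ℂ, f ‖w‖ = 2 * π * ∫ r in Ioi (0:ℝ), r * f r := by
  rw [integral_fun_norm_addHaar volume f]
  simp [Measure.real, Complex.volume_ball]
  ring

theorem integral_exp_neg_sq_norm_div {s : ℝ} (hs : 0 < s) :
    ∫ w : ℂ, rexp (-‖w‖ ^ 2 / s) = π * s := by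
  simp_rw [neg_div, div_eq_inv_mul, ← neg_mul]
  rw [GaussianFourier.integral_rexp_neg_mul_sq_norm (inv_pos.2 hs)]
  simp

theorem norm_sub_ofReal_mul_exp_sq (w : ℂ) (c θ : ℝ) :
    ‖w - c * Complex.exp (θ * Complex.I)‖ ^ 2
      = ‖w‖ ^ 2 + c ^ 2 - 2 * ‖w‖ * c * Real.cos (θ - Complex.arg w) := by
  rw [Complex.sq_norm, Complex.normSq_apply, Real.cos_sub]
  simp only [Complex.sub_re, Complex.sub_im, Complex.re_ofReal_mul, Complex.im_ofReal_mul,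
    Complex.exp_ofReal_mul_I_re, Complex.exp_ofReal_mul_I_im]
  linear_combination c ^ 2 * sin_sq_add_cos_sq θ
    + (2 * c * Real.cos θ) * Complex.norm_mul_cos_arg w
    + (2 * c * Real.sin θ) * Complex.norm_mul_sin_arg w - Complex.sq_norm w
    - Complex.normSq_apply w

theorem continuous_I0 : Continuous I0 :=
  continuous_const.mul <|
    intervalIntegral.continuous_parametric_intervalIntegral_of_continuous' (by fun_prop) _ _

theorem integral_exp_mul_cos_sub (x φ : ℝ) :
    ∫ θ in (-π)..π, rexp (x * Real.cos (θ - φ)) = 2 * π * I0 x := by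
  have hper : Function.Periodic (fun θ => rexp (x * Real.cos θ)) (2 * π) := fun θ => by
    simp only [Real.cos_add_two_pi]
  have hshift := hper.intervalIntegral_add_eq (-π - φ) (-π)
  rw [show -π - φ + 2 * π = π - φ by ring, show -π + 2 * π = π by ring] at hshift
  rw [intervalIntegral.integral_comp_sub_right (fun θ => rexp (x * Real.cos θ)), hshift, I0]
  field_simp

theorem one_le_I0 (x : ℝ) : 1 ≤ I0 x := by
  have hmono : ∫ θ in (-π)..π, (1 + x * Real.cos θ) ≤ ∫ θ in (-π)..π, rexp (x * Real.cos θ) :=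
    intervalIntegral.integral_mono_on (by linarith [pi_pos])
      ((by fun_prop : Continuous _).intervalIntegrable _ _)
      ((by fun_prop : Continuous _).intervalIntegrable _ _)
      fun θ _ => by linarith [add_one_le_exp (x * Real.cos θ)]
  rw [intervalIntegral.integral_add ((by fun_prop : Continuous _).intervalIntegrable _ _)
    ((by fun_prop : Continuous _).intervalIntegrable _ _), intervalIntegral.integral_const_mul,
    integral_cos] at hmono
  rw [I0, one_div, le_inv_mul_iff₀ (by positivity)]
  simpa [two_mul] using hmono

theorem I0_le_exp_abs (x : ℝ) : I0 x ≤ rexp |x| := by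
  have hmono : ∫ θ in (-π)..π, rexp (x * Real.cos θ) ≤ ∫ θ in (-π)..π, rexp |x| :=
    intervalIntegral.integral_mono_on (by linarith [pi_pos])
      ((by fun_prop : Continuous _).intervalIntegrable _ _)
      ((by fun_prop : Continuous _).intervalIntegrable _ _)
      fun θ _ => exp_le_exp.2 <| (le_abs_self _).trans <| by
        rw [abs_mul]; exact mul_le_of_le_one_right (abs_nonneg x) (Real.abs_cos_le_one θ)
  rw [intervalIntegral.integral_const, smul_eq_mul] at hmono
  rw [I0, one_div, inv_mul_le_iff₀ (by positivity)]
  linarith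

theorem kappa_pos (σ c r : ℝ) : 0 < kappa σ c r :=
  mul_pos (exp_pos _) (zero_lt_one.trans_le (one_le_I0 _))

theorem continuous_kappa (σ c : ℝ) : Continuous (kappa σ c) :=
  (Real.continuous_exp.comp (by fun_prop)).mul (continuous_I0.comp (by fun_prop))

theorem kappa_le_exp {σ c r : ℝ} (hr : 0 ≤ r) :
    kappa σ c r ≤ rexp (-(r - |c|) ^ 2 / σ ^ 2) := by
  calc kappa σ c r ≤ rexp (-(r ^ 2 + c ^ 2) / σ ^ 2) * rexp |2 * r * c / σ ^ 2| :=
        mul_le_mul_of_nonneg_left (I0_le_exp_abs _) (exp_pos _).le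
    _ = rexp (-(r - |c|) ^ 2 / σ ^ 2) := by
        rw [← Real.exp_add, abs_div, abs_mul, abs_mul, abs_of_nonneg hr, abs_two,
          abs_of_nonneg (sq_nonneg σ)]
        congr 1
        rw [← sq_abs c]
        ring

theorem neg_div_le_log_kappa (σ c r : ℝ) :
    -(r ^ 2 + c ^ 2) / σ ^ 2 ≤ Real.log (kappa σ c r) := by
  rw [kappa, Real.log_mul (exp_pos _).ne' (zero_lt_one.trans_le (one_le_I0 _)).ne', Real.log_exp]
  linarith [Real.log_nonneg (one_le_I0 (2 * r * c / σ ^ 2))]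

theorem log_kappa_nonpos {σ c r : ℝ} (hr : 0 ≤ r) : Real.log (kappa σ c r) ≤ 0 :=
  Real.log_nonpos (kappa_pos σ c r).le <| (kappa_le_exp hr).trans <|
    exp_le_one_iff.2 <| div_nonpos_of_nonpos_of_nonneg (neg_nonpos.2 (sq_nonneg _)) (sq_nonneg σ)

theorem integrableOn_pow_mul_kappa {σ : ℝ} (hσ : σ ≠ 0) (c : ℝ) (n : ℕ) :
    IntegrableOn (fun r => r ^ n * kappa σ c r) (Ioi 0) := by
  have hb : 0 < (2 * σ ^ 2)⁻¹ := by positivity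
  have hdom : IntegrableOn (fun r : ℝ =>
      rexp (|c| ^ 2 / σ ^ 2) * (r ^ (n : ℝ) * rexp (-(2 * σ ^ 2)⁻¹ * r ^ 2))) (Ioi 0) :=
    (integrableOn_rpow_mul_exp_neg_mul_sq hb (by linarith [n.cast_nonneg (α := ℝ)])).const_mul _
  refine hdom.mono' ((continuous_pow n).mul (continuous_kappa σ c)).aestronglyMeasurable ?_
  filter_upwards [ae_restrict_mem measurableSet_Ioi] with r (hr : 0 < r)
  rw [Real.norm_of_nonneg (mul_nonneg (pow_nonneg hr.le n) (kappa_pos σ c r).le), rpow_natCast,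
    mul_left_comm]
  exact mul_le_mul_of_nonneg_left
    ((kappa_le_exp hr.le).trans (exp_neg_sq_sub_div_le _ _ (sq_nonneg σ))) (pow_nonneg hr.le n)

theorem integrableOn_mul_kappa_mul_log {σ : ℝ} (hσ : σ ≠ 0) (c : ℝ) :
    IntegrableOn (fun r => r * kappa σ c r * Real.log (kappa σ c r)) (Ioi 0) := by
  have hdom := ((integrableOn_pow_mul_kappa hσ c 3).add
    ((integrableOn_pow_mul_kappa hσ c 1).const_mul (c ^ 2))).div_const (σ ^ 2)
  refine hdom.mono' (((continuous_id.mul (continuous_kappa σ c)).mul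
    ((continuous_kappa σ c).log fun r => (kappa_pos σ c r).ne')).aestronglyMeasurable) ?_
  filter_upwards [ae_restrict_mem measurableSet_Ioi] with r (hr : 0 < r)
  have hκ := kappa_pos σ c r
  rw [norm_mul, Real.norm_of_nonneg (mul_nonneg hr.le hκ.le),
    Real.norm_of_nonpos (log_kappa_nonpos hr.le)]
  refine (mul_le_mul_of_nonneg_left
    (neg_le.1 ((neg_div _ _).symm.trans_le (neg_div_le_log_kappa σ c r)))
    (mul_nonneg hr.le hκ.le)).trans_eq ?_
  simp only [Pi.add_apply]
  ring

theorem kappa_eq_intervalIntegral (σ c r φ : ℝ) :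
    kappa σ c r = (2 * π)⁻¹ *
      ∫ θ in (-π)..π, rexp (-(r ^ 2 + c ^ 2 - 2 * r * c * Real.cos (θ - φ)) / σ ^ 2) := by
  have hsplit : ∀ θ, rexp (-(r ^ 2 + c ^ 2 - 2 * r * c * Real.cos (θ - φ)) / σ ^ 2)
      = rexp (-(r ^ 2 + c ^ 2) / σ ^ 2) * rexp (2 * r * c / σ ^ 2 * Real.cos (θ - φ)) :=
    fun θ => by rw [← Real.exp_add]; ring_nf
  simp_rw [hsplit, intervalIntegral.integral_const_mul, integral_exp_mul_cos_sub, kappa]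
  field_simp

theorem kappa_norm_eq_intervalIntegral (σ c : ℝ) (w : ℂ) :
    kappa σ c ‖w‖ = (2 * π)⁻¹ *
      ∫ θ in (-π)..π, rexp (-‖w - c * Complex.exp (θ * Complex.I)‖ ^ 2 / σ ^ 2) := by
  simp_rw [norm_sub_ofReal_mul_exp_sq]
  exact kappa_eq_intervalIntegral σ c ‖w‖ (Complex.arg w)

theorem integral_kappa_norm {σ : ℝ} (hσ : σ ≠ 0) (c : ℝ) :
    ∫ w : ℂ, kappa σ c ‖w‖ = π * σ ^ 2 := by
  let g : ℂ → ℝ := fun w => rexp (-‖w‖ ^ 2 / σ ^ 2)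
  let F : ℂ → ℝ → ℝ := fun w θ => g (w - c * Complex.exp (θ * Complex.I))
  have hg : ∫ w, g w = π * σ ^ 2 := integral_exp_neg_sq_norm_div (by positivity)
  have hgi : Integrable g := .of_integral_ne_zero (by rw [hg]; positivity)
  have hcont : Continuous (Function.uncurry F) := by
    change Continuous fun p : ℂ × ℝ =>
      rexp (-‖p.1 - c * Complex.exp (p.2 * Complex.I)‖ ^ 2 / σ ^ 2)
    fun_prop
  have hF : Integrable (Function.uncurry F) (volume.prod (volume.restrict (Ioc (-π) π))) := by
    refine (integrable_prod_iff' hcont.aestronglyMeasurable).2 ⟨ae_of_all _ fun θ => ?_, ?_⟩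
    · exact hgi.comp_sub_right (c * Complex.exp (θ * Complex.I))
    · have hnorm : ∀ θ : ℝ, ∫ w, ‖F w θ‖ = π * σ ^ 2 := fun θ => by
        simp only [F, g, Real.norm_of_nonneg (exp_pos _).le]
        exact (integral_sub_right_eq_self g _).trans hg
      simp only [Function.uncurry_apply_pair, hnorm]
      exact integrable_const _
  calc ∫ w : ℂ, kappa σ c ‖w‖ = ∫ w : ℂ, (2 * π)⁻¹ * ∫ θ in Ioc (-π) π, F w θ := by
        simp_rw [kappa_norm_eq_intervalIntegral,
          intervalIntegral.integral_of_le (neg_le_self pi_pos.le)]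
        rfl
    _ = (2 * π)⁻¹ * ∫ θ in Ioc (-π) π, ∫ w, F w θ := by
        rw [integral_const_mul, integral_integral_swap hF]
    _ = (2 * π)⁻¹ * ∫ θ in Ioc (-π) π, π * σ ^ 2 := by
        congr 1
        exact setIntegral_congr_fun measurableSet_Ioc fun θ _ =>
          (integral_sub_right_eq_self g _).trans hg
    _ = π * σ ^ 2 := by
        rw [setIntegral_const, volume_real_Ioc_of_le (neg_le_self pi_pos.le), smul_eq_mul]
        field_simp
        ring

theorem integral_mul_kappa {σ : ℝ} (hσ : σ ≠ 0) (c : ℝ) :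
    ∫ r in Ioi (0:ℝ), r * kappa σ c r = σ ^ 2 / 2 := by
  have hpolar := integral_comp_norm_complex (kappa σ c)
  rw [integral_kappa_norm hσ] at hpolar
  rw [eq_div_iff two_ne_zero]
  exact mul_left_cancel₀ pi_ne_zero (by linarith)

theorem integral_mul_kappa_div_mul_log_div {σ : ℝ} (hσ : σ ≠ 0) (c : ℝ) {A : ℝ} (hA : A ≠ 0) :
    ∫ r in Ioi (0:ℝ), r * (kappa σ c r / A * Real.log (kappa σ c r / A))
      = ((∫ r in Ioi (0:ℝ), r * kappa σ c r * Real.log (kappa σ c r))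
          - Real.log A * (σ ^ 2 / 2)) / A := by
  have hsplit : ∀ r ∈ Ioi (0:ℝ), r * (kappa σ c r / A * Real.log (kappa σ c r / A))
      = (r * kappa σ c r * Real.log (kappa σ c r) - Real.log A * (r * kappa σ c r)) / A := by
    intro r _
    rw [Real.log_div (kappa_pos σ c r).ne' hA]
    ring
  have hmass : IntegrableOn (fun r => r * kappa σ c r) (Ioi 0) := by
    simpa only [pow_one] using integrableOn_pow_mul_kappa hσ c 1
  rw [setIntegral_congr_fun measurableSet_Ioi hsplit, integral_div,
    integral_sub (integrableOn_mul_kappa_mul_log hσ c) (hmass.const_mul _),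
    integral_const_mul, integral_mul_kappa hσ]

theorem stmt5_general (σ c : ℝ) (hσ : 0 < σ) :
    (-(∫ w : ℂ, (kappa σ c ‖w‖ / (π * σ ^ 2))
          * Real.log (kappa σ c ‖w‖ / (π * σ ^ 2)))
        - Real.log (π * Real.exp 1 * σ ^ 2))
      = -(∫ r in Set.Ioi (0:ℝ), (2 * r / σ ^ 2) * kappa σ c r * Real.log (kappa σ c r)) - 1 := by
  have hA : π * σ ^ 2 ≠ 0 := by positivity
  rw [integral_comp_norm_complex
      (fun r => kappa σ c r / (π * σ ^ 2) * Real.log (kappa σ c r / (π * σ ^ 2))),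
    integral_mul_kappa_div_mul_log_div hσ.ne' c hA]
  have hrhs : ∫ r in Ioi (0:ℝ), (2 * r / σ ^ 2) * kappa σ c r * Real.log (kappa σ c r)
      = 2 / σ ^ 2 * ∫ r in Ioi (0:ℝ), r * kappa σ c r * Real.log (kappa σ c r) := by
    rw [← integral_const_mul]
    congr with r
    ring
  have hlog : Real.log (π * Real.exp 1 * σ ^ 2) = Real.log (π * σ ^ 2) + 1 := by
    rw [mul_right_comm, Real.log_mul hA (exp_pos 1).ne', Real.log_exp]
  rw [hrhs, hlog]
  field_simp
  ring

/-- Theorem 1 of the paper: for the density `p(w) = κ_c(|w|)/(πσ²)` on `ℂ`, the differential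
entropy of `p` minus the Gaussian noise entropy `ln(πeσ²)` equals the one-dimensional
expression `−∫_0^∞ (2r/σ²) κ_c(r) ln κ_c(r) dr − 1` (all in nats). -/
theorem stmt5 (σ c : ℝ) (hσ : 0 < σ) (hc : 0 ≤ c) :
    (-(∫ w : ℂ, (kappa σ c ‖w‖ / (π * σ ^ 2))
          * Real.log (kappa σ c ‖w‖ / (π * σ ^ 2)))
        - Real.log (π * Real.exp 1 * σ ^ 2))
      = -(∫ r in Set.Ioi (0:ℝ), (2 * r / σ ^ 2) * kappa σ c r * Real.log (kappa σ c r)) - 1 :=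
  stmt5_general σ c hσ
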